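/- Let 0 < μ < L, 0 ≤ ε < 1, and set L_ε = (1+ε)L, μ_ε = (1-ε)μ, κ_ε = μ_ε/L_ε, ρ_ε = (1-κ_ε)/(1+κ_ε). Suppose x₀, x₁, x*, g₀, g₁ ∈ ℝ^n and f₀, f₁, f* ∈ ℝ satisfy: the three F_{μ,L}-interpolation inequalities between (x₀,f₀,g₀), (x₁,f₁,g₁), (x*,f*,0); g₁ᵀ(x₁-x₀) ≤ 0; and g₀ᵀg₁ ≤ ε‖g₀‖‖g₁‖. Then f₁ - f* ≤ ρ_ε²(f₀ - f*). -/

import Mathlib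

/-!
Write `A = (1 + ε) L`, `B = (1 - ε) μ`, and measure positions from `x⋆` and values from `f⋆`.
Multiplying each interpolation inequality through by `L` clears all denominators. The angle
condition enters through AM-GM, as `2 (A - B)(A + B) ⟪g₀, g₁⟫ ≤ ε ((A - B)² ‖g₀‖² + (A + B)² ‖g₁‖²)`.
With `K = 2 μ L (L - μ)(A + 3B)(A - B) > 0`, the quantity
`K ((A - B)² (f₀ - f⋆) - (A + B)² (f₁ - f⋆))` is a combination, with nonnegative polynomial
weights, of the slacks of these inequalities and of the line-search condition `⟪g₁, x₁ - x₀⟫ ≤ 0`,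
plus a nonnegative combination of two squared norms of linear combinations of
`g₀, g₁, x₀ - x⋆, x₁ - x⋆`; hence it is nonnegative.
-/

open RealInnerProductSpace

/-- The `F_{μ,L}` interpolation inequality between the triples `(xi, fi, gi)` and
`(xj, fj, gj)`. -/
def InterpIneq {n : ℕ} (μ L : ℝ) (xi xj : EuclideanSpace ℝ (Fin n)) (fi fj : ℝ)
    (gi gj : EuclideanSpace ℝ (Fin n)) : Prop :=
  fi ≥ fj + ⟪gj, xi - xj⟫ + 1 / (2 * (1 - μ / L)) *
    ((1 / L) * ‖gi - gj‖ ^ 2 + μ * ‖xi - xj‖ ^ 2 - (2 * μ / L) * ⟪gj - gi, xj - xi⟫)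

namespace InterpIneq

variable {n : ℕ} {μ L : ℝ}

theorem scaled {xi xj gi gj : EuclideanSpace ℝ (Fin n)} {fi fj : ℝ} (hL : 0 < L) (hμL : μ < L)
    (h : InterpIneq μ L xi xj fi fj gi gj) :
    ‖gi - gj‖ ^ 2 + μ * L * ‖xi - xj‖ ^ 2 - 2 * μ * ⟪gi - gj, xi - xj⟫ ≤
      2 * (L - μ) * (fi - fj - ⟪gj, xi - xj⟫) := by
  have hLμ : 0 < L - μ := sub_pos.2 hμL
  rw [InterpIneq, ← neg_sub gi gj, ← neg_sub xi xj, inner_neg_neg, ge_iff_le, ← sub_nonneg] at h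
  field_simp at h
  linarith

theorem scaled_of_stationary {xs x g : EuclideanSpace ℝ (Fin n)} {fs f : ℝ} (hL : 0 < L)
    (hμL : μ < L) (h : InterpIneq μ L xs x fs f 0 g) :
    ‖g‖ ^ 2 + μ * L * ‖x - xs‖ ^ 2 - 2 * μ * ⟪g, x - xs⟫ ≤
      2 * (L - μ) * (⟪g, x - xs⟫ - (f - fs)) := by
  have h' := h.scaled hL hμL
  rw [zero_sub, norm_neg, ← neg_sub x xs, norm_neg, inner_neg_neg, inner_neg_right] at h'
  linarith

end InterpIneq

section InnerProductSpace

variable {E : Type*} [NormedAddCommGroup E] [InnerProductSpace ℝ E]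

theorem norm_smul_add_smul_add_smul_add_smul_sq_real (a b c d : ℝ) (u v w z : E) :
    ‖a • u + b • v + c • w + d • z‖ ^ 2 =
      a ^ 2 * ‖u‖ ^ 2 + b ^ 2 * ‖v‖ ^ 2 + c ^ 2 * ‖w‖ ^ 2 + d ^ 2 * ‖z‖ ^ 2
      + 2 * (a * b) * ⟪u, v⟫ + 2 * (a * c) * ⟪u, w⟫ + 2 * (a * d) * ⟪u, z⟫
      + 2 * (b * c) * ⟪v, w⟫ + 2 * (b * d) * ⟪v, z⟫ + 2 * (c * d) * ⟪w, z⟫ := by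
  simp only [← real_inner_self_eq_norm_sq, inner_add_left, inner_add_right,
    real_inner_smul_left, real_inner_smul_right, real_inner_comm u v, real_inner_comm u w,
    real_inner_comm u z, real_inner_comm v w, real_inner_comm v z, real_inner_comm w z]
  ring

theorem two_mul_mul_inner_le_of_inner_le {u v : E} {ε a b : ℝ} (hε : 0 ≤ ε) (ha : 0 ≤ a)
    (hb : 0 ≤ b) (h : ⟪u, v⟫ ≤ ε * ‖u‖ * ‖v‖) :
    2 * a * b * ⟪u, v⟫ ≤ ε * (a ^ 2 * ‖u‖ ^ 2 + b ^ 2 * ‖v‖ ^ 2) :=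
  calc 2 * a * b * ⟪u, v⟫ ≤ 2 * a * b * (ε * ‖u‖ * ‖v‖) := by gcongr
    _ = ε * (2 * (a * ‖u‖) * (b * ‖v‖)) := by ring
    _ ≤ ε * ((a * ‖u‖) ^ 2 + (b * ‖v‖) ^ 2) := by gcongr; exact two_mul_le_add_sq _ _
    _ = ε * (a ^ 2 * ‖u‖ ^ 2 + b ^ 2 * ‖v‖ ^ 2) := by ring

theorem gap_le_sq_mul_gap_of_interpolation {μ L ε : ℝ} (hμ : 0 < μ) (hμL : μ < L)
    (hε0 : 0 ≤ ε) (hε1 : ε < 1) {d₀ d₁ g₀ g₁ : E} {F₀ F₁ : ℝ}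
    (h₀₁ : ‖g₀ - g₁‖ ^ 2 + μ * L * ‖d₀ - d₁‖ ^ 2 - 2 * μ * ⟪g₀ - g₁, d₀ - d₁⟫ ≤
      2 * (L - μ) * (F₀ - F₁ - ⟪g₁, d₀ - d₁⟫))
    (h₀ : ‖g₀‖ ^ 2 + μ * L * ‖d₀‖ ^ 2 - 2 * μ * ⟪g₀, d₀⟫ ≤ 2 * (L - μ) * (⟪g₀, d₀⟫ - F₀))
    (h₁ : ‖g₁‖ ^ 2 + μ * L * ‖d₁‖ ^ 2 - 2 * μ * ⟪g₁, d₁⟫ ≤ 2 * (L - μ) * (⟪g₁, d₁⟫ - F₁))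
    (hls : ⟪g₁, d₁ - d₀⟫ ≤ 0) (hangle : ⟪g₀, g₁⟫ ≤ ε * ‖g₀‖ * ‖g₁‖) :
    F₁ ≤ (((1 + ε) * L - (1 - ε) * μ) / ((1 + ε) * L + (1 - ε) * μ)) ^ 2 * F₀ := by
  set A := (1 + ε) * L with hA
  set B := (1 - ε) * μ with hB
  have hL : 0 < L := hμ.trans hμL
  have hLμ : 0 < L - μ := sub_pos.2 hμL
  have hB0 : 0 < B := mul_pos (sub_pos.2 hε1) hμ
  have hM : 0 < A - B := by rw [hA, hB]; linarith [mul_nonneg hε0 (add_pos hL hμ).le]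
  have hP : 0 < A + B := by positivity
  have hangle' := two_mul_mul_inner_le_of_inner_le hε0 hM.le hP.le hangle
  have sos₁ := sq_nonneg ‖(-((A - B) * ((3 - ε) * L + B))) • g₀
      + ((A + B) * ((3 * ε - 1) * L + B)) • g₁
      + (L * (A - B) * (A + 3 * B)) • d₀ + (-(L * (A - B) * (A + B))) • d₁‖
  have sos₂ := sq_nonneg ‖(-((A - B) * (L - μ))) • g₀ + (-((L + μ) * (A + B))) • g₁
      + (0 : ℝ) • d₀ + (2 * μ * L * (A + B)) • d₁‖
  rw [norm_smul_add_smul_add_smul_add_smul_sq_real] at sos₁ sos₂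
  simp only [norm_sub_sq_real, inner_sub_left, inner_sub_right] at h₀₁ hls
  have key : μ * L * (2 * (L - μ)) * (A + 3 * B) * (A - B) * ((A + B) ^ 2 * F₁) ≤
      μ * L * (2 * (L - μ)) * (A + 3 * B) * (A - B) * ((A - B) ^ 2 * F₀) := by
    linear_combination (μ * L * (A + 3 * B) * (A - B) ^ 2 * (A + B)) * h₀₁
      + (μ * L * (A + 3 * B) * (A - B) ^ 2 * (2 * B)) * h₀
      + (μ * L * (A + 3 * B) * (A - B) * (A + B) * (2 * B)) * h₁
      + (μ * L * (2 * (L - μ)) * (A + 3 * B) * (A - B) * (A + B) ^ 2) * hls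
      + (μ * L * (2 * (L - μ)) * (A + 3 * B)) * hangle'
      + μ ^ 2 * sos₁ + ((A - B) * B) * sos₂
  have hgap := le_of_mul_le_mul_left key (by positivity)
  rw [div_pow, div_mul_eq_mul_div, le_div_iff₀ (by positivity)]
  linarith

end InnerProductSpace

theorem stmt13 {n : ℕ} (μ L ε : ℝ) (hμ : 0 < μ) (hμL : μ < L) (hε0 : 0 ≤ ε) (hε1 : ε < 1)
    (x₀ x₁ xstar g₀ g₁ : EuclideanSpace ℝ (Fin n)) (f₀ f₁ fstar : ℝ)
    (h1 : InterpIneq μ L x₀ x₁ f₀ f₁ g₀ g₁)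
    (h2 : InterpIneq μ L xstar x₀ fstar f₀ 0 g₀)
    (h3 : InterpIneq μ L xstar x₁ fstar f₁ 0 g₁)
    (h4 : ⟪g₁, x₁ - x₀⟫ ≤ 0)
    (h5 : ⟪g₀, g₁⟫ ≤ ε * ‖g₀‖ * ‖g₁‖) :
    f₁ - fstar ≤
      ((1 - ((1 - ε) * μ) / ((1 + ε) * L)) / (1 + ((1 - ε) * μ) / ((1 + ε) * L))) ^ 2 *
        (f₀ - fstar) := by
  have hL : 0 < L := hμ.trans hμL
  have hA : (1 + ε) * L ≠ 0 := by positivity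
  rw [one_sub_div hA, one_add_div hA, div_div_div_cancel_right₀ hA]
  refine gap_le_sq_mul_gap_of_interpolation (d₀ := x₀ - xstar) (d₁ := x₁ - xstar) hμ hμL hε0 hε1
    ?_ (h2.scaled_of_stationary hL hμL) (h3.scaled_of_stationary hL hμL) ?_ h5
  · simpa only [sub_sub_sub_cancel_right] using h1.scaled hL hμL
  · simpa only [sub_sub_sub_cancel_right] using h4
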